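/- arXiv:2503.15263 — 3 statements merged into one kernel-verified Lean document; each statement's English description precedes it below -/
import Mathlib

section
/- Let Φ = {Φ_V} be a translation-invariant uniformly absolutely convergent interaction on Ω = E^ℤ, and set φ = −Σ_{V ∋ 0, V ⊂ ℤ_{≥0} finite} Φ_V. Then there exists a sequence C_n > 0 with (1/n) log C_n → 0 such that every S-invariant Gibbs measure μ for Φ satisfies C_n^{-1} ≤ μ([ω_0^{n-1}]) / exp(S_nφ(ω) − nP(φ)) ≤ C_n for all n ∈ ℕ and ω ∈ Ω, where P(φ) is the topological pressure of φ. -/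
open Filter Topology MeasureTheory

namespace GP

/-- The configuration space `Ω = E^ℤ`. -/
abbrev Conf (E : Type*) := ℤ → E

variable {E : Type*}

/-- The shift by `i`: `(shiftZ i ω) k = ω (k + i)`.  The left shift `S` is `shiftZ 1`. -/
def shiftZ (i : ℤ) (ω : Conf E) : Conf E := fun k => ω (k + i)

/-- The cylinder set determined by a word `w ∈ E^n` (placed on coordinates `0,…,n-1`). -/
def cylW {n : ℕ} (w : Fin n → E) : Set (Conf E) := {ω | ∀ j : Fin n, ω ((j : ℕ) : ℤ) = w j}

/-- The cylinder set `[ω_0^{n-1}]`. -/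
def cylPt (ω : Conf E) (n : ℕ) : Set (Conf E) :=
  {ω' | ∀ j : ℕ, j < n → ω' (j : ℤ) = ω (j : ℤ)}

/-- Birkhoff sum `S_n φ = ∑_{k=0}^{n-1} φ ∘ S^k`. -/
def birk (φ : Conf E → ℝ) (n : ℕ) (ω : Conf E) : ℝ :=
  ∑ k ∈ Finset.range n, φ (shiftZ (k : ℤ) ω)

/-- Topological pressure of `φ` on the full shift:
`P(φ) = lim_n (1/n) log ∑_{w ∈ E^n} sup_{ω ∈ [w]} exp (S_n φ (ω))`
(the limit exists; we use `limsup` as the defining expression). -/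
noncomputable def press [Fintype E] (φ : Conf E → ℝ) : ℝ :=
  Filter.limsup (fun n : ℕ =>
    Real.log (∑ w : Fin n → E, sSup ((fun ω => Real.exp (birk φ n ω)) '' cylW w)) / n) atTop

/-- Kolmogorov–Sinai entropy of a shift-invariant measure on the full shift,
computed along the canonical generating partition into cylinders
(the limit exists; we use `limsup` as the defining expression). -/
noncomputable def ent [Fintype E] [MeasurableSpace E] (μ : Measure (Conf E)) : ℝ :=
  Filter.limsup (fun n : ℕ =>
    (- ∑ w : Fin n → E, ((μ (cylW w)).toReal * Real.log (μ (cylW w)).toReal)) / n) atTop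

/-- Shift invariance of a measure. -/
def ShiftInv [MeasurableSpace E] (μ : Measure (Conf E)) : Prop :=
  Measure.map (shiftZ 1) μ = μ

/-- `μ` is an equilibrium state for `φ`: `μ` is a shift-invariant Borel probability
measure with `h(μ) + ∫ φ dμ = P(φ)`. -/
def IsEquilibrium [Fintype E] [MeasurableSpace E] (φ : Conf E → ℝ)
    (μ : Measure (Conf E)) : Prop :=
  IsProbabilityMeasure μ ∧ ShiftInv μ ∧ ent μ + ∫ ω, φ ω ∂μ = press φ

/-- `ω^c`: the configuration equal to `c` at site `0` and to `ω` elsewhere. -/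
def upd0 (ω : Conf E) (c : E) : Conf E := Function.update ω 0 c

/-- Partial sums `ρ_n(ξ,η) = ∑_{i=-n}^{n} (φ(S^i ξ) - φ(S^i η))`. -/
noncomputable def rhoN (φ : Conf E → ℝ) (ξ η : Conf E) (n : ℕ) : ℝ :=
  ∑ i ∈ Finset.Icc (-(n : ℤ)) (n : ℤ), (φ (shiftZ i ξ) - φ (shiftZ i η))

/-- `φ` has the extensibility property: for all `a b ∈ E`, the functions
`ω ↦ ∑_{i=-n}^{n} (φ(S^i(ω^b)) - φ(S^i(ω^a)))` converge uniformly as `n → ∞`. -/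
def Extensible (φ : Conf E → ℝ) : Prop :=
  ∀ a b : E, ∃ r : Conf E → ℝ,
    TendstoUniformly (fun n ω => rhoN φ (upd0 ω b) (upd0 ω a) n) r atTop

/-- The cocycle `ρ^φ(ξ,η) = lim_n ∑_{i=-n}^{n} (φ(S^i ξ) - φ(S^i η))`. -/
noncomputable def rho (φ : Conf E → ℝ) (ξ η : Conf E) : ℝ :=
  limUnder atTop (rhoN φ ξ η)

/-- `ξ` and `η` differ in at most finitely many coordinates. -/
def FinDiff (ξ η : Conf E) : Prop := {k : ℤ | ξ k ≠ η k}.Finite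

/-- `ovr Λ ξ ω` is the configuration `ξ_Λ ω_{ℤ∖Λ}`, equal to `ξ` on `Λ` and to `ω` off `Λ`. -/
def ovr (Λ : Finset ℤ) (ξ : {k // k ∈ Λ} → E) (ω : Conf E) : Conf E :=
  fun k => if h : k ∈ Λ then ξ ⟨k, h⟩ else ω k

/-- `γ` is a specification: each `γ_Λ(·|ω_{Λ^c})` is a probability distribution on `E^Λ`,
and the family is consistent (`γ_Λ = γ_Λ ∘ γ_V` for `V ⊆ Λ`); here `γ Λ ω` denotes
`γ_Λ(ω_Λ | ω_{Λ^c})`. -/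
def IsSpecification [Fintype E] (γ : Finset ℤ → Conf E → ℝ) : Prop :=
  (∀ (Λ : Finset ℤ) (ω : Conf E), 0 ≤ γ Λ ω) ∧
  (∀ (Λ : Finset ℤ) (ω : Conf E), ∑ ξ : {k // k ∈ Λ} → E, γ Λ (ovr Λ ξ ω) = 1) ∧
  (∀ V Λ : Finset ℤ, V ⊆ Λ → ∀ ω : Conf E,
     γ Λ ω = (∑ η : {k // k ∈ V} → E, γ Λ (ovr V η ω)) * γ V ω)

/-- Non-nullness: `inf_ω γ_Λ(ω_Λ|ω_{Λ^c}) > 0` for every finite `Λ`. -/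
def NonNull (γ : Finset ℤ → Conf E → ℝ) : Prop :=
  ∀ Λ : Finset ℤ, ∃ c > (0 : ℝ), ∀ ω : Conf E, c ≤ γ Λ ω

/-- Continuity (quasilocality): `ω ↦ γ_Λ(ω_Λ|ω_{Λ^c})` is continuous for every finite `Λ`. -/
def ContSpec [TopologicalSpace E] (γ : Finset ℤ → Conf E → ℝ) : Prop :=
  ∀ Λ : Finset ℤ, Continuous (γ Λ)

/-- A Gibbsian specification: a non-null continuous specification. -/
def IsGibbsSpec [Fintype E] [TopologicalSpace E] (γ : Finset ℤ → Conf E → ℝ) : Prop :=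
  IsSpecification γ ∧ NonNull γ ∧ ContSpec γ

/-- Translation invariance of a specification: `γ_{Λ+1} = γ_Λ ∘ S`. -/
def SpecTI (γ : Finset ℤ → Conf E → ℝ) : Prop :=
  ∀ (Λ : Finset ℤ) (ω : Conf E), γ (Λ.image (· + 1)) ω = γ Λ (shiftZ 1 ω)

/-- `μ` is a DLR-Gibbs measure for the specification `γ`: `μ` is a Borel probability
measure satisfying the DLR equations `∫ γ_Λ(f|·) dμ = ∫ f dμ` for every finite `Λ`
and every continuous `f` (equivalently, each `γ_Λ` is a version of the conditional
probabilities of `μ`). -/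
def IsDLRGibbs [Fintype E] [MeasurableSpace E] [TopologicalSpace E]
    (γ : Finset ℤ → Conf E → ℝ) (μ : Measure (Conf E)) : Prop :=
  IsProbabilityMeasure μ ∧
  ∀ (Λ : Finset ℤ) (f : Conf E → ℝ), Continuous f →
    ∫ ω, (∑ ξ : {k // k ∈ Λ} → E, γ Λ (ovr Λ ξ ω) * f (ovr Λ ξ ω)) ∂μ = ∫ ω, f ω ∂μ

/-- The specification `γ^φ` associated with an extensible potential `φ`:
`γ^φ_Λ(ω_Λ|ω_{Λ^c}) = (∑_{ξ_Λ ∈ E^Λ} exp ρ^φ(ξ_Λ ω_{ℤ∖Λ}, ω))⁻¹`. -/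
noncomputable def specOf [Fintype E] (φ : Conf E → ℝ) : Finset ℤ → Conf E → ℝ :=
  fun Λ ω => (∑ ξ : {k // k ∈ Λ} → E, Real.exp (rho φ (ovr Λ ξ ω) ω))⁻¹

/-- The configuration `𝐚_{-∞}^{-1} b ω_1^{∞}`: equal to `a` at all negative
coordinates, to `b` at coordinate `0`, and to `ω` at positive coordinates. -/
def bca (a : E) (ω : Conf E) (b : E) : Conf E :=
  fun k => if k < 0 then a else if k = 0 then b else ω k

/-- The potential associated with a specification:
`φ_γ(ω) = log (γ_{{0}}(ω_0 | 𝐚_{-∞}^{-1} ω_1^{∞}) / γ_{{0}}(a | 𝐚_{-∞}^{-1} ω_1^{∞}))`. -/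
noncomputable def phiOf (γ : Finset ℤ → Conf E → ℝ) (a : E) (ω : Conf E) : ℝ :=
  Real.log (γ ({0} : Finset ℤ) (bca a ω (ω 0)) / γ ({0} : Finset ℤ) (bca a ω a))

/-- `μ` is weak Bowen-Gibbs for `φ` with constant `P`. -/
def WeakBowenGibbs [MeasurableSpace E] (μ : Measure (Conf E)) (φ : Conf E → ℝ)
    (P : ℝ) : Prop :=
  ∃ C : ℕ → ℝ, (∀ n, 0 < C n) ∧
    Tendsto (fun n : ℕ => Real.log (C n) / n) atTop (𝓝 0) ∧
    ∀ (n : ℕ) (ω : Conf E),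
      (C n)⁻¹ ≤ (μ (cylPt ω n)).toReal / Real.exp (birk φ n ω - n * P) ∧
      (μ (cylPt ω n)).toReal / Real.exp (birk φ n ω - n * P) ≤ C n

/-- An interaction: a family `Φ = (Φ_V)` of continuous local functions,
`Φ_V(ω)` depending only on `ω_V`. -/
def IsInteraction [TopologicalSpace E] (Φ : Finset ℤ → Conf E → ℝ) : Prop :=
  (∀ V : Finset ℤ, Continuous (Φ V)) ∧
  ∀ (V : Finset ℤ) (ω ω' : Conf E), (∀ k ∈ V, ω k = ω' k) → Φ V ω = Φ V ω'

/-- Translation invariance of an interaction: `Φ_{V+1}(ω) = Φ_V(Sω)`. -/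
def InterTI (Φ : Finset ℤ → Conf E → ℝ) : Prop :=
  ∀ (V : Finset ℤ) (ω : Conf E), Φ (V.image (· + 1)) ω = Φ V (shiftZ 1 ω)

/-- `sup_ω |Φ_V(ω)|`. -/
noncomputable def supAbs (Φ : Finset ℤ → Conf E → ℝ) (V : Finset ℤ) : ℝ :=
  ⨆ ω : Conf E, |Φ V ω|

/-- Uniform absolute convergence: `∑_{V ∋ 0} sup_ω |Φ_V(ω)| < ∞`. -/
def UAC (Φ : Finset ℤ → Conf E → ℝ) : Prop :=
  Summable (fun V : {V : Finset ℤ // (0 : ℤ) ∈ V} => supAbs Φ V.1)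

/-- The Hamiltonian `H_Λ(ω) = ∑_{V ∩ Λ ≠ ∅} Φ_V(ω)`. -/
noncomputable def ham (Φ : Finset ℤ → Conf E → ℝ) (Λ : Finset ℤ) (ω : Conf E) : ℝ :=
  ∑' V : {V : Finset ℤ // (V ∩ Λ).Nonempty}, Φ V.1 ω

/-- The Gibbsian specification of the interaction `Φ`:
`γ^Φ_Λ(ξ_Λ|ω_{Λ^c}) = exp(-H_Λ(ξ_Λ ω_{Λ^c})) / Z_Λ(ω)`. -/
noncomputable def specOfInter [Fintype E] (Φ : Finset ℤ → Conf E → ℝ) :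
    Finset ℤ → Conf E → ℝ :=
  fun Λ ω => Real.exp (-(ham Φ Λ ω)) /
    ∑ ζ : {k // k ∈ Λ} → E, Real.exp (-(ham Φ Λ (ovr Λ ζ ω)))

/-- The potential `φ = -∑_{V ∋ 0, V ⊆ ℤ_{≥0}} Φ_V`. -/
noncomputable def phiInter (Φ : Finset ℤ → Conf E → ℝ) (ω : Conf E) : ℝ :=
  - ∑' V : {V : Finset ℤ // (0 : ℤ) ∈ V ∧ ∀ k ∈ V, (0 : ℤ) ≤ k}, Φ V.1 ω

/-!
Put `Λ = [0, n)`, let `U` be the energy of the interactions inside `Λ` and `b_n` the total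
strength `∑ sup |Φ_V|` of the interactions that meet `Λ` without being contained in it. Both the
Hamiltonian `H_Λ` and `-S_n φ` differ from `U` by at most `b_n`, and `U` only depends on the
configuration in `Λ`. Hence the Gibbsian probability `γ_Λ(ω_Λ | η)` and the ratio
`exp (S_n φ (ω)) / Z_n(φ)`, where `Z_n(φ) = ∑_{w ∈ E^n} sup_{[w]} exp (S_n φ)`, both equal
`exp (-U(ω)) / ∑_ζ exp (-U(ζ))` up to a factor `exp (±2 b_n)`, uniformly in `η`, and the DLR
equations carry the bound over to `μ([ω_0^{n-1}])`. The sequence `log Z_n(φ)` is subadditive, so by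
Fekete's lemma `log Z_n(φ) / n → P(φ)` and `n P(φ) ≤ log Z_n(φ)`. Finally, translation invariance
bounds `b_n` by twice the sum of the first `n` tails of the convergent series `∑_{V ∋ 0} sup |Φ_V|`,
so `b_n = o(n)` by Cesàro.
-/

lemma shiftZ_shiftZ (i j : ℤ) (ω : Conf E) : shiftZ i (shiftZ j ω) = shiftZ (i + j) ω := by
  funext k; simp [shiftZ, add_assoc]

lemma shiftZ_zero (ω : Conf E) : shiftZ 0 ω = ω := by
  funext k; simp [shiftZ]

lemma shiftZ_surjective (i : ℤ) : Function.Surjective (shiftZ i : Conf E → Conf E) :=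
  fun ω => ⟨shiftZ (-i) ω, by rw [shiftZ_shiftZ, add_neg_cancel, shiftZ_zero]⟩

def translate (k : ℤ) : Finset ℤ ≃ Finset ℤ := (Equiv.addRight k).finsetCongr

@[simp] lemma mem_translate {k a : ℤ} {V : Finset ℤ} : a ∈ translate k V ↔ a - k ∈ V := by
  simp [translate, Equiv.finsetCongr_apply, Finset.mem_map_equiv, sub_eq_add_neg]

lemma translate_translate (i j : ℤ) (V : Finset ℤ) :
    translate i (translate j V) = translate (j + i) V := by
  ext a; simp [sub_sub, add_comm]

lemma translate_zero (V : Finset ℤ) : translate 0 V = V := by ext a; simp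

section Translation

variable {Φ : Finset ℤ → Conf E → ℝ}

lemma InterTI.apply_translate (hTI : InterTI Φ) (k : ℤ) (V : Finset ℤ) (ω : Conf E) :
    Φ (translate k V) ω = Φ V (shiftZ k ω) := by
  have step (k : ℤ) (V : Finset ℤ) (ω : Conf E) :
      Φ (translate (k + 1) V) ω = Φ (translate k V) (shiftZ 1 ω) := by
    rw [← translate_translate, ← hTI]
    congr 1; ext a; simp [sub_eq_add_neg]
  induction k using Int.induction_on generalizing V ω with
  | zero => rw [translate_zero, shiftZ_zero]
  | succ k ih => rw [step, ih, shiftZ_shiftZ, add_comm]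
  | pred k ih =>
    have := step (-k - 1) V (shiftZ (-1) ω)
    rw [sub_add_cancel, ih, shiftZ_shiftZ, shiftZ_shiftZ, add_neg_cancel, shiftZ_zero] at this
    rw [← this, sub_eq_add_neg]

lemma InterTI.supAbs_translate (hTI : InterTI Φ) (k : ℤ) (V : Finset ℤ) :
    supAbs Φ (translate k V) = supAbs Φ V := by
  simp only [supAbs, hTI.apply_translate]
  exact (shiftZ_surjective k).iSup_comp fun ω => |Φ V ω|

end Translation

def meeting (Λ : Finset ℤ) : Set (Finset ℤ) := {V | (V ∩ Λ).Nonempty}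

section Weights

variable {Φ : Finset ℤ → Conf E → ℝ}

lemma supAbs_nonneg (Φ : Finset ℤ → Conf E → ℝ) (V : Finset ℤ) : 0 ≤ supAbs Φ V :=
  Real.iSup_nonneg fun _ => abs_nonneg _

lemma indicator_supAbs_nonneg (T : Set (Finset ℤ)) (V : Finset ℤ) :
    0 ≤ T.indicator (supAbs Φ) V :=
  Set.indicator_nonneg (fun V _ => supAbs_nonneg Φ V) V

lemma summable_indicator_supAbs_mem (hTI : InterTI Φ) (hUAC : UAC Φ) (k : ℤ) :
    Summable ({V : Finset ℤ | k ∈ V}.indicator (supAbs Φ)) := by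
  have h0 : Summable ({V : Finset ℤ | (0 : ℤ) ∈ V}.indicator (supAbs Φ)) :=
    summable_subtype_iff_indicator.mp hUAC
  convert (translate (-k)).summable_iff.mpr h0 using 1
  funext V
  simp [Set.indicator_apply, hTI.supAbs_translate]

variable {T T' : Set (Finset ℤ)} {Λ : Finset ℤ}

lemma summable_indicator_supAbs (hTI : InterTI Φ) (hUAC : UAC Φ) (hT : T ⊆ meeting Λ) :
    Summable (T.indicator (supAbs Φ)) := by
  refine .of_nonneg_of_le (indicator_supAbs_nonneg T) (fun V => ?_)
    (summable_sum (s := Λ) fun k _ => summable_indicator_supAbs_mem hTI hUAC k)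
  by_cases hV : V ∈ T
  · obtain ⟨k, hk⟩ := hT hV
    rw [Finset.mem_inter] at hk
    calc T.indicator (supAbs Φ) V = {V : Finset ℤ | k ∈ V}.indicator (supAbs Φ) V := by
          simp [hV, hk.1]
      _ ≤ _ := Finset.single_le_sum
          (f := fun k => {V : Finset ℤ | k ∈ V}.indicator (supAbs Φ) V)
          (fun k _ => indicator_supAbs_nonneg _ V) hk.2
  · simpa [hV] using Finset.sum_nonneg fun k _ => indicator_supAbs_nonneg _ V

lemma tsum_indicator_supAbs_mono (hTI : InterTI Φ) (hUAC : UAC Φ) (hTT' : T ⊆ T')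
    (hT' : T' ⊆ meeting Λ) :
    ∑' V, T.indicator (supAbs Φ) V ≤ ∑' V, T'.indicator (supAbs Φ) V :=
  Summable.tsum_le_tsum (Set.indicator_le_indicator_of_subset hTT' (supAbs_nonneg Φ))
    (summable_indicator_supAbs hTI hUAC (hTT'.trans hT')) (summable_indicator_supAbs hTI hUAC hT')

variable [Fintype E] [TopologicalSpace E]

lemma IsInteraction.abs_le_supAbs (hΦ : IsInteraction Φ) (V : Finset ℤ) (ω : Conf E) :
    |Φ V ω| ≤ supAbs Φ V := by
  have hfin : (Set.range fun ω : Conf E => |Φ V ω|) ⊆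
      Set.range fun ξ : {k // k ∈ V} → E => |Φ V (ovr V ξ ω)| := by
    rintro _ ⟨ω', rfl⟩
    exact ⟨fun k => ω' k, congrArg abs (hΦ.2 V _ ω' fun k hk => by simp [ovr, hk])⟩
  exact le_ciSup ((Set.finite_range _).subset hfin).bddAbove ω

lemma norm_indicator_le_indicator_supAbs (hΦ : IsInteraction Φ) (T : Set (Finset ℤ))
    (ω : Conf E) (V : Finset ℤ) :
    ‖T.indicator (fun V => Φ V ω) V‖ ≤ T.indicator (supAbs Φ) V := by
  by_cases hV : V ∈ T
  · simpa [hV] using hΦ.abs_le_supAbs V ω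
  · simp [hV]

lemma summable_indicator_apply (hΦ : IsInteraction Φ) (hTI : InterTI Φ) (hUAC : UAC Φ)
    (hT : T ⊆ meeting Λ) (ω : Conf E) :
    Summable (T.indicator fun V => Φ V ω) :=
  .of_norm_bounded (summable_indicator_supAbs hTI hUAC hT)
    (norm_indicator_le_indicator_supAbs hΦ T ω)

lemma abs_tsum_indicator_le (hΦ : IsInteraction Φ) (hTI : InterTI Φ) (hUAC : UAC Φ)
    (hT : T ⊆ meeting Λ) (ω : Conf E) :
    |∑' V, T.indicator (fun V => Φ V ω) V| ≤ ∑' V, T.indicator (supAbs Φ) V :=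
  tsum_of_norm_bounded (summable_indicator_supAbs hTI hUAC hT).hasSum
    (norm_indicator_le_indicator_supAbs hΦ T ω)

end Weights

lemma tsum_indicator_eq_sum_add_tsum_diff {α M : Type*} [AddCommMonoid M] [TopologicalSpace M]
    [ContinuousAdd M] [T2Space M] {f : α → M} {T : Set α} {s : Finset α} (hs : ↑s ⊆ T)
    (hf : Summable ((T \ ↑s).indicator f)) :
    ∑' a, T.indicator f a = ∑ a ∈ s, f a + ∑' a, (T \ ↑s).indicator f a := by
  have hsplit : T.indicator f = fun a => (↑s : Set α).indicator f a + (T \ ↑s).indicator f a := by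
    rw [← Set.indicator_union_of_disjoint Set.disjoint_sdiff_right, Set.union_sdiff_cancel hs]
  rw [hsplit, Summable.tsum_add (summable_of_ne_finset_zero (s := s)
    fun a ha => Set.indicator_of_notMem ha f) hf, sum_eq_tsum_indicator]

def inside (Λ : Finset ℤ) : Finset (Finset ℤ) := Λ.powerset.filter Finset.Nonempty

def boundary (Λ : Finset ℤ) : Set (Finset ℤ) := meeting Λ \ ↑(inside Λ)

noncomputable def innerEnergy (Φ : Finset ℤ → Conf E → ℝ) (Λ : Finset ℤ) (ω : Conf E) : ℝ :=
  ∑ V ∈ inside Λ, Φ V ω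

noncomputable def boundaryWeight (Φ : Finset ℤ → Conf E → ℝ) (Λ : Finset ℤ) : ℝ :=
  ∑' V, (boundary Λ).indicator (supAbs Φ) V

lemma coe_inside_subset_meeting (Λ : Finset ℤ) : ↑(inside Λ) ⊆ meeting Λ := by
  intro V hV
  simp only [inside, Finset.coe_filter, Finset.mem_powerset] at hV
  simpa [meeting, Finset.inter_eq_left.mpr hV.1] using hV.2

lemma boundary_subset_meeting (Λ : Finset ℤ) : boundary Λ ⊆ meeting Λ := Set.sdiff_subset

def minAt (k : ℤ) : Set (Finset ℤ) := {V | k ∈ V ∧ ∀ j ∈ V, k ≤ j}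

lemma minAt_subset_meeting (k : ℤ) : minAt k ⊆ meeting {k} :=
  fun _ hV => ⟨k, by simp [hV.1]⟩

lemma translate_mem_minAt {k : ℤ} {V : Finset ℤ} : translate k V ∈ minAt k ↔ V ∈ minAt 0 := by
  simp only [minAt, Set.mem_ofPred_eq, mem_translate, sub_self]
  refine and_congr_right fun _ => ⟨fun h j hj => ?_, fun h j hj => ?_⟩
  · have := h (j + k) (by simpa using hj)
    omega
  · have := h _ hj
    omega

def minInRange (n : ℕ) : Set (Finset ℤ) := ⋃ k ∈ Finset.range n, minAt (k : ℤ)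

lemma minInRange_subset_meeting (n : ℕ) : minInRange n ⊆ meeting (Finset.Ico 0 (n : ℤ)) := by
  intro V hV
  simp only [minInRange, Set.mem_iUnion, Finset.mem_range] at hV
  obtain ⟨k, hk, hV⟩ := hV
  exact ⟨k, Finset.mem_inter.mpr ⟨hV.1, by simp; omega⟩⟩

lemma coe_inside_subset_minInRange (n : ℕ) :
    ↑(inside (Finset.Ico 0 (n : ℤ))) ⊆ minInRange n := by
  intro V hV
  simp only [inside, Finset.coe_filter, Finset.mem_powerset] at hV
  obtain ⟨hsub, hne⟩ := hV
  have hmin := Finset.mem_Ico.mp (hsub (V.min'_mem hne))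
  simp only [minInRange, Set.mem_iUnion, Finset.mem_range]
  refine ⟨(V.min' hne).toNat, by omega, ?_⟩
  rw [Int.toNat_of_nonneg hmin.1]
  exact ⟨V.min'_mem hne, fun j hj => V.min'_le j hj⟩

section Energy

variable {Φ : Finset ℤ → Conf E → ℝ}

lemma phiInter_eq (ω : Conf E) :
    phiInter Φ ω = -∑' V, (minAt 0).indicator (fun V => Φ V ω) V :=
  congrArg Neg.neg (tsum_subtype (minAt 0) fun V => Φ V ω)

lemma phiInter_shiftZ (hTI : InterTI Φ) (k : ℤ) (ω : Conf E) :
    phiInter Φ (shiftZ k ω) = -∑' V, (minAt k).indicator (fun V => Φ V ω) V := by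
  rw [phiInter_eq, ← (translate k).tsum_eq ((minAt k).indicator fun V => Φ V ω)]
  congr 1
  refine tsum_congr fun V => ?_
  by_cases hV : V ∈ minAt 0
  · rw [Set.indicator_of_mem hV, Set.indicator_of_mem (translate_mem_minAt.mpr hV),
      hTI.apply_translate]
  · rw [Set.indicator_of_notMem hV,
      Set.indicator_of_notMem (translate_mem_minAt.not.mpr hV)]

variable [TopologicalSpace E]

lemma IsInteraction.innerEnergy_congr (hΦ : IsInteraction Φ) {Λ : Finset ℤ} {ω ω' : Conf E}
    (h : ∀ k ∈ Λ, ω k = ω' k) : innerEnergy Φ Λ ω = innerEnergy Φ Λ ω' :=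
  Finset.sum_congr rfl fun V hV =>
    hΦ.2 V ω ω' fun k hk => h k (Finset.mem_powerset.mp (Finset.mem_filter.mp hV).1 hk)

variable [Fintype E]

lemma ham_eq_innerEnergy_add (hΦ : IsInteraction Φ) (hTI : InterTI Φ) (hUAC : UAC Φ)
    (Λ : Finset ℤ) (ω : Conf E) :
    ham Φ Λ ω = innerEnergy Φ Λ ω + ∑' V, (boundary Λ).indicator (fun V => Φ V ω) V :=
  (tsum_subtype (meeting Λ) fun V => Φ V ω).trans
    (tsum_indicator_eq_sum_add_tsum_diff (coe_inside_subset_meeting Λ)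
      (summable_indicator_apply hΦ hTI hUAC (boundary_subset_meeting Λ) ω))

lemma abs_ham_sub_innerEnergy_le (hΦ : IsInteraction Φ) (hTI : InterTI Φ) (hUAC : UAC Φ)
    (Λ : Finset ℤ) (ω : Conf E) :
    |ham Φ Λ ω - innerEnergy Φ Λ ω| ≤ boundaryWeight Φ Λ := by
  rw [ham_eq_innerEnergy_add hΦ hTI hUAC, add_sub_cancel_left]
  exact abs_tsum_indicator_le hΦ hTI hUAC (boundary_subset_meeting Λ) ω

lemma birk_phiInter_eq (hΦ : IsInteraction Φ) (hTI : InterTI Φ) (hUAC : UAC Φ)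
    (n : ℕ) (ω : Conf E) :
    birk (phiInter Φ) n ω = -∑' V, (minInRange n).indicator (fun V => Φ V ω) V := by
  have hdisj : (↑(Finset.range n) : Set ℕ).PairwiseDisjoint fun k : ℕ => minAt (k : ℤ) := by
    intro i _ j _ hij
    refine Set.disjoint_left.mpr fun V hi hj => hij ?_
    exact_mod_cast le_antisymm (hi.2 _ hj.1) (hj.2 _ hi.1)
  simp only [birk, phiInter_shiftZ hTI, Finset.sum_neg_distrib, minInRange,
    Finset.indicator_biUnion_apply _ _ hdisj]
  rw [Summable.tsum_finsetSum fun k _ =>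
    summable_indicator_apply hΦ hTI hUAC (minAt_subset_meeting _) ω]

lemma abs_birk_add_innerEnergy_le (hΦ : IsInteraction Φ) (hTI : InterTI Φ) (hUAC : UAC Φ)
    (n : ℕ) (ω : Conf E) :
    |birk (phiInter Φ) n ω + innerEnergy Φ (Finset.Ico 0 n) ω| ≤
      boundaryWeight Φ (Finset.Ico 0 n) := by
  have hsub : minInRange n \ ↑(inside (Finset.Ico 0 (n : ℤ))) ⊆ boundary (Finset.Ico 0 n) :=
    Set.sdiff_subset_sdiff_left (minInRange_subset_meeting n)
  rw [birk_phiInter_eq hΦ hTI hUAC, tsum_indicator_eq_sum_add_tsum_diff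
    (coe_inside_subset_minInRange n)
    (summable_indicator_apply hΦ hTI hUAC (hsub.trans (boundary_subset_meeting _)) ω),
    innerEnergy, neg_add, neg_add_cancel_comm, abs_neg]
  exact (abs_tsum_indicator_le hΦ hTI hUAC (hsub.trans (boundary_subset_meeting _)) ω).trans
    (tsum_indicator_supAbs_mono hTI hUAC hsub (boundary_subset_meeting _))

end Energy

lemma exists_mem_notMem_of_mem_boundary {Λ V : Finset ℤ} (hV : V ∈ boundary Λ) :
    ∃ x ∈ V, x ∈ Λ ∧ ∃ y ∈ V, y ∉ Λ := by
  obtain ⟨⟨x, hx⟩, hVin⟩ := hV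
  rw [Finset.mem_inter] at hx
  have hnsub : ¬ V ⊆ Λ := fun hsub =>
    hVin (Finset.mem_filter.mpr ⟨Finset.mem_powerset.mpr hsub, x, hx.1⟩)
  obtain ⟨y, hy, hyΛ⟩ := Finset.not_subset.mp hnsub
  exact ⟨x, hx.1, hx.2, y, hy, hyΛ⟩

def farFromZero (m : ℕ) : Set (Finset ℤ) := {V | (0 : ℤ) ∈ V ∧ ¬ V ⊆ Finset.Icc (-(m : ℤ)) m}

lemma farFromZero_subset_meeting (m : ℕ) : farFromZero m ⊆ meeting {0} :=
  fun _ hV => ⟨0, by simp [hV.1]⟩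

/-- Centre `V` at its point `m ∈ [0, n)`: it then leaves `[-m, m]` if it leaves `[0, n)` on the
left, and `[-(n-1-m), n-1-m]` if it leaves on the right. -/
lemma exists_translate_mem_farFromZero {n : ℕ} {V : Finset ℤ}
    (hV : V ∈ boundary (Finset.Ico 0 (n : ℤ))) :
    ∃ m ∈ Finset.range n, translate (-m) V ∈ farFromZero m ∨
      translate (-m) V ∈ farFromZero (n - 1 - m) := by
  obtain ⟨x, hx, hxΛ, y, hy, hyΛ⟩ := exists_mem_notMem_of_mem_boundary hV
  rw [Finset.mem_Ico] at hxΛ hyΛ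
  have hm : ((x.toNat : ℕ) : ℤ) = x := Int.toNat_of_nonneg hxΛ.1
  have h0 : (0 : ℤ) ∈ translate (-(x.toNat : ℤ)) V := by simpa [hm] using hx
  have hy' : y - x ∈ translate (-(x.toNat : ℤ)) V := by simpa [hm] using hy
  refine ⟨x.toNat, Finset.mem_range.mpr (by omega), ?_⟩
  by_cases hyneg : y < 0
  · exact .inl ⟨h0, fun hsub => by have := Finset.mem_Icc.mp (hsub hy'); omega⟩
  · exact .inr ⟨h0, fun hsub => by have := Finset.mem_Icc.mp (hsub hy'); omega⟩

section BoundaryWeight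

variable {Φ : Finset ℤ → Conf E → ℝ}

noncomputable def tailWeight (Φ : Finset ℤ → Conf E → ℝ) (m : ℕ) : ℝ :=
  ∑' V, (farFromZero m).indicator (supAbs Φ) V

lemma boundaryWeight_nonneg (Λ : Finset ℤ) : 0 ≤ boundaryWeight Φ Λ :=
  tsum_nonneg (indicator_supAbs_nonneg _)

lemma tendsto_tailWeight (hTI : InterTI Φ) (hUAC : UAC Φ) :
    Tendsto (tailWeight Φ) atTop (𝓝 0) := by
  have h := tendsto_tsum_of_dominated_convergence
    (𝓕 := atTop) (f := fun m V => (farFromZero m).indicator (supAbs Φ) V) (g := 0)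
    (summable_indicator_supAbs_mem hTI hUAC 0) (fun V => ?_) (.of_forall fun m V => ?_)
  · simp only [Pi.zero_apply, tsum_zero] at h
    exact h
  · refine tendsto_const_nhds.congr' ?_
    filter_upwards [eventually_ge_atTop (V.sup Int.natAbs)] with m hm
    refine (Set.indicator_of_notMem (fun hV => hV.2 fun j hj => ?_) _).symm
    have := (Finset.le_sup (f := Int.natAbs) hj).trans hm
    rw [Finset.mem_Icc]
    omega
  · rw [Real.norm_of_nonneg (indicator_supAbs_nonneg _ V)]
    exact Set.indicator_le_indicator_of_subset (fun W hW => hW.1) (supAbs_nonneg Φ) V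

lemma boundaryWeight_Ico_le (hTI : InterTI Φ) (hUAC : UAC Φ) (n : ℕ) :
    boundaryWeight Φ (Finset.Ico 0 n) ≤ 2 * ∑ m ∈ Finset.range n, tailWeight Φ m := by
  set g : ℕ → Finset ℤ → ℝ := fun m V =>
    (farFromZero m).indicator (supAbs Φ) (translate (-m) V) +
      (farFromZero (n - 1 - m)).indicator (supAbs Φ) (translate (-m) V)
  have hsummable (k m : ℕ) :
      Summable fun V => (farFromZero k).indicator (supAbs Φ) (translate (-m) V) :=
    (translate (-m)).summable_iff.mpr
      (summable_indicator_supAbs hTI hUAC (farFromZero_subset_meeting k))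
  have hg (m : ℕ) : Summable (g m) := (hsummable m m).add (hsummable _ m)
  have hle (V : Finset ℤ) :
      (boundary (Finset.Ico 0 (n : ℤ))).indicator (supAbs Φ) V ≤ ∑ m ∈ Finset.range n, g m V := by
    have hg0 (m : ℕ) : 0 ≤ g m V :=
      add_nonneg (indicator_supAbs_nonneg _ _) (indicator_supAbs_nonneg _ _)
    by_cases hV : V ∈ boundary (Finset.Ico 0 (n : ℤ))
    · obtain ⟨m, hm, hfar⟩ := exists_translate_mem_farFromZero hV
      rw [Set.indicator_of_mem hV, ← hTI.supAbs_translate (-m)]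
      refine le_trans ?_ (Finset.single_le_sum (fun m _ => hg0 m) hm)
      rcases hfar with hfar | hfar
      · exact (Set.indicator_of_mem hfar (supAbs Φ)).ge.trans
          (le_add_of_nonneg_right (indicator_supAbs_nonneg _ _))
      · exact (Set.indicator_of_mem hfar (supAbs Φ)).ge.trans
          (le_add_of_nonneg_left (indicator_supAbs_nonneg _ _))
    · rw [Set.indicator_of_notMem hV]
      exact Finset.sum_nonneg fun m _ => hg0 m
  calc boundaryWeight Φ (Finset.Ico 0 n)
      ≤ ∑' V, ∑ m ∈ Finset.range n, g m V :=
        Summable.tsum_le_tsum hle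
          (summable_indicator_supAbs hTI hUAC (boundary_subset_meeting _))
          (summable_sum fun m _ => hg m)
    _ = ∑ m ∈ Finset.range n, (tailWeight Φ m + tailWeight Φ (n - 1 - m)) := by
        rw [Summable.tsum_finsetSum fun m _ => hg m]
        refine Finset.sum_congr rfl fun m _ => ?_
        rw [Summable.tsum_add (hsummable m m) (hsummable _ m), tailWeight, tailWeight,
          Equiv.tsum_eq, Equiv.tsum_eq]
    _ = 2 * ∑ m ∈ Finset.range n, tailWeight Φ m := by
        rw [Finset.sum_add_distrib, Finset.sum_range_reflect, two_mul]

lemma tendsto_boundaryWeight_div (hTI : InterTI Φ) (hUAC : UAC Φ) :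
    Tendsto (fun n : ℕ => boundaryWeight Φ (Finset.Ico 0 n) / n) atTop (𝓝 0) := by
  have h := (tendsto_tailWeight hTI hUAC).cesaro.const_mul 2
  rw [mul_zero] at h
  refine squeeze_zero (fun n => div_nonneg (boundaryWeight_nonneg _) n.cast_nonneg)
    (fun n => ?_) h
  rw [div_eq_inv_mul, mul_left_comm]
  exact mul_le_mul_of_nonneg_left (boundaryWeight_Ico_le hTI hUAC n) (by positivity)

end BoundaryWeight

lemma birk_add (φ : Conf E → ℝ) (n m : ℕ) (ω : Conf E) :
    birk φ (n + m) ω = birk φ n ω + birk φ m (shiftZ n ω) := by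
  simp only [birk, Finset.sum_range_add, shiftZ_shiftZ]
  congr 1
  refine Finset.sum_congr rfl fun k _ => ?_
  push_cast
  rw [add_comm]

lemma cylW_nonempty [Nonempty E] {n : ℕ} (w : Fin n → E) : (cylW w).Nonempty := by
  classical
  refine ⟨fun k => if h : 0 ≤ k ∧ k < n then w ⟨k.toNat, by omega⟩ else Classical.arbitrary E,
    fun j => ?_⟩
  have h : (0 : ℤ) ≤ (j : ℕ) ∧ ((j : ℕ) : ℤ) < n := ⟨by positivity, by exact_mod_cast j.2⟩
  simp only [dif_pos h, Int.toNat_natCast]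

lemma mem_cylW_of_mem_cylW_append {n m : ℕ} {u : Fin n → E} {v : Fin m → E} {ω : Conf E}
    (hω : ω ∈ cylW (Fin.append u v)) : ω ∈ cylW u ∧ shiftZ n ω ∈ cylW v := by
  refine ⟨fun i => ?_, fun i => ?_⟩
  · simpa using hω (Fin.castAdd m i)
  · have := hω (Fin.natAdd n i)
    simp only [Fin.val_natAdd, Fin.append_right] at this
    simpa [shiftZ, add_comm] using this

noncomputable def partitionFn [Fintype E] (φ : Conf E → ℝ) (n : ℕ) : ℝ :=
  ∑ w : Fin n → E, sSup ((fun ω => Real.exp (birk φ n ω)) '' cylW w)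

section Pressure

variable {φ : Conf E → ℝ} {K : ℝ}

lemma abs_birk_le (hφ : ∀ ω, |φ ω| ≤ K) (n : ℕ) (ω : Conf E) : |birk φ n ω| ≤ n * K := by
  calc |birk φ n ω| ≤ ∑ k ∈ Finset.range n, |φ (shiftZ k ω)| := Finset.abs_sum_le_sum_abs _ _
    _ ≤ ∑ _k ∈ Finset.range n, K := Finset.sum_le_sum fun k _ => hφ _
    _ = n * K := by simp

lemma exp_birk_le_sSup (hφ : ∀ ω, |φ ω| ≤ K) {n : ℕ} {S : Set (Conf E)} {ω : Conf E}
    (hω : ω ∈ S) : Real.exp (birk φ n ω) ≤ sSup ((fun ω => Real.exp (birk φ n ω)) '' S) := by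
  refine le_csSup ⟨Real.exp (n * K), ?_⟩ ⟨ω, hω, rfl⟩
  rintro _ ⟨ω', -, rfl⟩
  exact Real.exp_le_exp.mpr ((le_abs_self _).trans (abs_birk_le hφ n ω'))

variable [Nonempty E]

lemma sSup_exp_birk_pos (hφ : ∀ ω, |φ ω| ≤ K) {n : ℕ} (w : Fin n → E) :
    0 < sSup ((fun ω => Real.exp (birk φ n ω)) '' cylW w) :=
  (Real.exp_pos _).trans_le (exp_birk_le_sSup hφ (cylW_nonempty w).some_mem)

variable [Fintype E]

lemma partitionFn_pos (hφ : ∀ ω, |φ ω| ≤ K) (n : ℕ) : 0 < partitionFn φ n :=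
  Finset.sum_pos (fun w _ => sSup_exp_birk_pos hφ w) Finset.univ_nonempty

lemma exp_birk_le_partitionFn (hφ : ∀ ω, |φ ω| ≤ K) (n : ℕ) (ω : Conf E) :
    Real.exp (birk φ n ω) ≤ partitionFn φ n :=
  (exp_birk_le_sSup hφ (S := cylW fun j : Fin n => ω j) fun _ => rfl).trans
    (Finset.single_le_sum (f := fun w => sSup ((fun ω => Real.exp (birk φ n ω)) '' cylW w))
      (fun w _ => (sSup_exp_birk_pos hφ w).le) (Finset.mem_univ _))

lemma partitionFn_zero : partitionFn φ 0 = 1 := by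
  have hcyl (w : Fin 0 → E) : cylW w = Set.univ := Set.eq_univ_of_forall fun _ j => j.elim0
  simp [partitionFn, hcyl, birk, Set.range_const]

lemma partitionFn_add_le (hφ : ∀ ω, |φ ω| ≤ K) (n m : ℕ) :
    partitionFn φ (n + m) ≤ partitionFn φ n * partitionFn φ m := by
  rw [partitionFn, ← (Fin.appendEquiv n m).sum_comp, Fintype.sum_prod_type, partitionFn,
    partitionFn, Finset.sum_mul_sum]
  refine Finset.sum_le_sum fun u _ => Finset.sum_le_sum fun v _ => ?_
  refine csSup_le ((cylW_nonempty _).image _) ?_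
  rintro _ ⟨ω, hω, rfl⟩
  obtain ⟨hu, hv⟩ := mem_cylW_of_mem_cylW_append hω
  dsimp only
  rw [birk_add, Real.exp_add]
  exact mul_le_mul (exp_birk_le_sSup hφ hu) (exp_birk_le_sSup hφ hv) (Real.exp_pos _).le
    (sSup_exp_birk_pos hφ u).le

lemma subadditive_log_partitionFn (hφ : ∀ ω, |φ ω| ≤ K) :
    Subadditive fun n => Real.log (partitionFn φ n) := fun n m => by
  rw [← Real.log_mul (partitionFn_pos hφ n).ne' (partitionFn_pos hφ m).ne']
  exact Real.log_le_log (partitionFn_pos hφ _) (partitionFn_add_le hφ n m)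

lemma bddBelow_log_partitionFn_div (hφ : ∀ ω, |φ ω| ≤ K) :
    BddBelow (Set.range fun n : ℕ => Real.log (partitionFn φ n) / n) := by
  have hK : 0 ≤ K := (abs_nonneg _).trans (hφ (Classical.arbitrary _))
  refine ⟨-K, ?_⟩
  rintro _ ⟨n, rfl⟩
  rcases Nat.eq_zero_or_pos n with rfl | hn
  · simpa using hK
  have hlog : birk φ n (Classical.arbitrary _) ≤ Real.log (partitionFn φ n) :=
    (Real.le_log_iff_exp_le (partitionFn_pos hφ n)).mpr (exp_birk_le_partitionFn hφ n _)
  rw [le_div_iff₀ (by exact_mod_cast hn)]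
  linarith [neg_abs_le (birk φ n (Classical.arbitrary _)),
    abs_birk_le hφ n (Classical.arbitrary _)]

lemma press_eq_lim (hφ : ∀ ω, |φ ω| ≤ K) :
    press φ = (subadditive_log_partitionFn hφ).lim :=
  ((subadditive_log_partitionFn hφ).tendsto_lim (bddBelow_log_partitionFn_div hφ)).limsup_eq

lemma tendsto_log_partitionFn_div (hφ : ∀ ω, |φ ω| ≤ K) :
    Tendsto (fun n : ℕ => Real.log (partitionFn φ n) / n) atTop (𝓝 (press φ)) :=
  press_eq_lim hφ ▸ (subadditive_log_partitionFn hφ).tendsto_lim (bddBelow_log_partitionFn_div hφ)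

lemma nat_mul_press_le_log_partitionFn (hφ : ∀ ω, |φ ω| ≤ K) (n : ℕ) :
    n * press φ ≤ Real.log (partitionFn φ n) := by
  rcases Nat.eq_zero_or_pos n with rfl | hn
  · simp [partitionFn_zero]
  rw [mul_comm, ← le_div_iff₀ (by exact_mod_cast hn), press_eq_lim hφ]
  exact (subadditive_log_partitionFn hφ).lim_le_div (bddBelow_log_partitionFn_div hφ) hn.ne'

lemma tendsto_log_partitionFn_sub_div (hφ : ∀ ω, |φ ω| ≤ K) :
    Tendsto (fun n : ℕ => (Real.log (partitionFn φ n) - n * press φ) / n) atTop (𝓝 0) := by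
  refine ((tendsto_log_partitionFn_div hφ).sub_const (press φ)).congr' ?_ |>.trans (by simp)
  filter_upwards [eventually_ne_atTop 0] with n hn
  rw [sub_div, mul_div_cancel_left₀ _ (Nat.cast_ne_zero.mpr hn)]

end Pressure

def WithinFactor (ε x y : ℝ) : Prop := x ≤ Real.exp ε * y ∧ y ≤ Real.exp ε * x

namespace WithinFactor

variable {ε δ x y z w : ℝ}

lemma symm (h : WithinFactor ε x y) : WithinFactor ε y x := And.symm h

lemma trans (h₁ : WithinFactor ε x y) (h₂ : WithinFactor δ y z) : WithinFactor (ε + δ) x z := by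
  constructor <;> rw [Real.exp_add, mul_assoc]
  · exact h₁.1.trans (mul_le_mul_of_nonneg_left h₂.1 (Real.exp_pos ε).le)
  · rw [mul_left_comm]
    exact h₂.2.trans (mul_le_mul_of_nonneg_left h₁.2 (Real.exp_pos δ).le)

lemma of_abs_sub_le {s t : ℝ} (h : |s - t| ≤ ε) : WithinFactor ε (Real.exp s) (Real.exp t) := by
  rw [abs_le] at h
  constructor <;> rw [← Real.exp_add] <;> exact Real.exp_le_exp.mpr (by linarith)

lemma sum {ι : Type*} {s : Finset ι} {f g : ι → ℝ} (h : ∀ i ∈ s, WithinFactor ε (f i) (g i)) :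
    WithinFactor ε (∑ i ∈ s, f i) (∑ i ∈ s, g i) := by
  rw [WithinFactor, Finset.mul_sum, Finset.mul_sum]
  exact ⟨Finset.sum_le_sum fun i hi => (h i hi).1, Finset.sum_le_sum fun i hi => (h i hi).2⟩

lemma div (h₁ : WithinFactor ε x y) (h₂ : WithinFactor δ z w) (hx : 0 ≤ x) (hy : 0 ≤ y)
    (hz : 0 < z) (hw : 0 < w) : WithinFactor (ε + δ) (x / z) (y / w) := by
  have key {a b c d ε δ : ℝ} (hab : a ≤ Real.exp ε * b) (hdc : d ≤ Real.exp δ * c)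
      (hb : 0 ≤ b) (hc : 0 < c) (hd : 0 < d) : a / c ≤ Real.exp (ε + δ) * (b / d) := by
    rw [div_le_iff₀ hc, Real.exp_add]
    calc a ≤ Real.exp ε * b := hab
      _ = Real.exp ε * (b / d) * d := by field_simp
      _ ≤ Real.exp ε * (b / d) * (Real.exp δ * c) := by gcongr
      _ = _ := by ring
  exact ⟨key h₁.1 h₂.2 hy hz hw, key h₁.2 h₂.1 hx hw hz⟩

lemma csSup_image {α : Type*} {S : Set α} {f : α → ℝ} {c : ℝ} (hS : S.Nonempty)
    (h : ∀ a ∈ S, WithinFactor ε (f a) c) : WithinFactor ε (sSup (f '' S)) c := by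
  have hbdd : BddAbove (f '' S) := ⟨Real.exp ε * c, by rintro _ ⟨a, ha, rfl⟩; exact (h a ha).1⟩
  obtain ⟨a, ha⟩ := hS
  refine ⟨csSup_le ⟨f a, a, ha, rfl⟩ ?_, (h a ha).2.trans ?_⟩
  · rintro _ ⟨b, hb, rfl⟩
    exact (h b hb).1
  · exact mul_le_mul_of_nonneg_left (le_csSup hbdd ⟨a, ha, rfl⟩) (Real.exp_pos ε).le

lemma exp_neg_le_div (h : WithinFactor ε x y) (hy : 0 < y) : Real.exp (-ε) ≤ x / y := by
  rw [le_div_iff₀ hy, Real.exp_neg, inv_mul_le_iff₀ (Real.exp_pos ε)]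
  exact h.2

lemma div_le_exp (h : WithinFactor ε x y) (hy : 0 < y) : x / y ≤ Real.exp ε := by
  rw [div_le_iff₀ hy]
  exact h.1

end WithinFactor

lemma ovr_ovr (Λ : Finset ℤ) (ζ ξ : {k // k ∈ Λ} → E) (η : Conf E) :
    ovr Λ ζ (ovr Λ ξ η) = ovr Λ ζ η := by
  funext k
  by_cases h : k ∈ Λ <;> simp [ovr, h]

@[simps]
def finEquivIco (n : ℕ) : Fin n ≃ {k // k ∈ Finset.Ico (0 : ℤ) n} where
  toFun j := ⟨j, Finset.mem_Ico.mpr ⟨by positivity, by exact_mod_cast j.2⟩⟩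
  invFun k := ⟨k.1.toNat, by have := Finset.mem_Ico.mp k.2; omega⟩
  left_inv j := by ext; simp
  right_inv k := by ext; have := Finset.mem_Ico.mp k.2; simp; omega

lemma partitionFn_eq_sum_Ico [Fintype E] (φ : Conf E → ℝ) (n : ℕ) :
    partitionFn φ n = ∑ ζ : {k // k ∈ Finset.Ico (0 : ℤ) n} → E,
      sSup ((fun ω => Real.exp (birk φ n ω)) '' cylW (ζ ∘ finEquivIco n)) :=
  ((finEquivIco n).symm.arrowCongr (Equiv.refl E)).sum_comp _ |>.symm

lemma ovr_mem_cylW {n : ℕ} (ζ : {k // k ∈ Finset.Ico (0 : ℤ) n} → E) (η : Conf E) :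
    ovr (Finset.Ico 0 n) ζ η ∈ cylW (ζ ∘ finEquivIco n) := fun j => by
  simp [ovr, finEquivIco, Finset.mem_Ico, j.2]

lemma eq_ovr_of_mem_cylW {n : ℕ} {ζ : {k // k ∈ Finset.Ico (0 : ℤ) n} → E} {x : Conf E}
    (hx : x ∈ cylW (ζ ∘ finEquivIco n)) (η : Conf E) :
    ∀ k ∈ Finset.Ico (0 : ℤ) n, x k = ovr (Finset.Ico 0 n) ζ η k := by
  intro k hk
  have := hx ((finEquivIco n).symm ⟨k, hk⟩)
  simpa [ovr, hk, Int.toNat_of_nonneg (Finset.mem_Ico.mp hk).1] using this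

lemma specOfInter_withinFactor [Fintype E] [Nonempty E] [TopologicalSpace E]
    {Φ : Finset ℤ → Conf E → ℝ} (hΦ : IsInteraction Φ) (hTI : InterTI Φ) (hUAC : UAC Φ)
    {K : ℝ} (hφ : ∀ ω, |phiInter Φ ω| ≤ K) (n : ℕ) (ω η : Conf E) :
    WithinFactor (4 * boundaryWeight Φ (Finset.Ico 0 n))
      (specOfInter Φ (Finset.Ico 0 n) (ovr (Finset.Ico 0 n) (fun k => ω k) η))
      (Real.exp (birk (phiInter Φ) n ω) / partitionFn (phiInter Φ) n) := by
  set Λ := Finset.Ico (0 : ℤ) n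
  set ε := boundaryWeight Φ Λ
  set a : ({k // k ∈ Λ} → E) → ℝ := fun ζ => Real.exp (-innerEnergy Φ Λ (ovr Λ ζ η))
  have hH (ζ : {k // k ∈ Λ} → E) :
      WithinFactor ε (Real.exp (-ham Φ Λ (ovr Λ ζ η))) (a ζ) :=
    .of_abs_sub_le <| by
      rw [neg_sub_neg, abs_sub_comm]
      exact abs_ham_sub_innerEnergy_le hΦ hTI hUAC _ _
  have hS (ζ : {k // k ∈ Λ} → E) {x : Conf E} (hx : ∀ k ∈ Λ, x k = ovr Λ ζ η k) :
      WithinFactor ε (Real.exp (birk (phiInter Φ) n x)) (a ζ) := by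
    refine .of_abs_sub_le ?_
    rw [← hΦ.innerEnergy_congr hx, sub_neg_eq_add]
    exact abs_birk_add_innerEnergy_le hΦ hTI hUAC n x
  have hZ : WithinFactor ε (∑ ζ, Real.exp (-ham Φ Λ (ovr Λ ζ η))) (∑ ζ, a ζ) :=
    .sum fun ζ _ => hH ζ
  have hQ : WithinFactor ε (partitionFn (phiInter Φ) n) (∑ ζ, a ζ) := by
    rw [partitionFn_eq_sum_Ico]
    exact .sum fun ζ _ => .csSup_image ⟨_, ovr_mem_cylW ζ η⟩
      fun x hx => hS ζ (eq_ovr_of_mem_cylW hx η)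
  have hγ : specOfInter Φ Λ (ovr Λ (fun k => ω k) η) =
      Real.exp (-ham Φ Λ (ovr Λ (fun k => ω k) η)) / ∑ ζ, Real.exp (-ham Φ Λ (ovr Λ ζ η)) := by
    simp only [specOfInter, ovr_ovr]
  have hZpos : 0 < ∑ ζ, Real.exp (-ham Φ Λ (ovr Λ ζ η)) :=
    Finset.sum_pos (fun _ _ => Real.exp_pos _) Finset.univ_nonempty
  have hapos : 0 < ∑ ζ, a ζ := Finset.sum_pos (fun _ _ => Real.exp_pos _) Finset.univ_nonempty
  rw [hγ, show 4 * ε = ε + ε + (ε + ε) by ring]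
  exact ((hH _).div hZ (Real.exp_pos _).le (Real.exp_pos _).le hZpos hapos).trans
    ((hS _ fun k hk => by simp [ovr, hk]).div hQ (Real.exp_pos _).le (Real.exp_pos _).le
      (partitionFn_pos hφ n) hapos).symm

def cylOn (Λ : Finset ℤ) (ω : Conf E) : Set (Conf E) := {x | ∀ k ∈ Λ, x k = ω k}

lemma cylPt_eq_cylOn (ω : Conf E) (n : ℕ) : cylPt ω n = cylOn (Finset.Ico 0 n) ω := by
  ext x
  refine ⟨fun h k hk => ?_, fun h j hj => h j (by simp [hj])⟩
  have hk := Finset.mem_Ico.mp hk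
  simpa [Int.toNat_of_nonneg hk.1] using h k.toNat (by omega)

lemma cylOn_eq_biInter (Λ : Finset ℤ) (ω : Conf E) :
    cylOn Λ ω = ⋂ k ∈ Λ, (fun x : Conf E => x k) ⁻¹' {ω k} := by
  ext x
  simp [cylOn]

lemma measurableSet_cylOn [MeasurableSpace E] [MeasurableSingletonClass E] (Λ : Finset ℤ)
    (ω : Conf E) : MeasurableSet (cylOn Λ ω) := by
  rw [cylOn_eq_biInter]
  exact Λ.measurableSet_biInter fun k _ => measurable_pi_apply k (measurableSet_singleton _)

lemma isClopen_cylOn [TopologicalSpace E] [DiscreteTopology E] (Λ : Finset ℤ) (ω : Conf E) :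
    IsClopen (cylOn Λ ω) := by
  rw [cylOn_eq_biInter]
  exact isClopen_biInter_finset fun k _ =>
    (isClopen_discrete {ω k}).preimage (continuous_apply k)

lemma ovr_mem_cylOn_iff {Λ : Finset ℤ} {ξ : {k // k ∈ Λ} → E} {η ω : Conf E} :
    ovr Λ ξ η ∈ cylOn Λ ω ↔ ξ = fun k : {k // k ∈ Λ} => ω k := by
  refine ⟨fun h => funext fun k => ?_, fun h k hk => by simp [ovr, hk, h]⟩
  simpa [ovr] using h k k.2

section DLR

variable [Fintype E] [MeasurableSpace E] [MeasurableSingletonClass E] [TopologicalSpace E]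
  [DiscreteTopology E] {γ : Finset ℤ → Conf E → ℝ} {μ : Measure (Conf E)} {Λ : Finset ℤ}

/-- Subtracting `c` lets the bounds below be read off with `integral_nonneg`, which, unlike
`integral_mono`, needs no integrability of `η ↦ γ_Λ(ω_Λ | η)`. -/
lemma integral_sub_eq_of_isDLRGibbs (hμ : IsDLRGibbs γ μ)
    (hγ : ∀ η, ∑ ξ : {k // k ∈ Λ} → E, γ Λ (ovr Λ ξ η) = 1) (ω : Conf E) (c : ℝ) :
    ∫ η, (γ Λ (ovr Λ (fun k => ω k) η) - c) ∂μ = (μ (cylOn Λ ω)).toReal - c := by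
  classical
  have : IsProbabilityMeasure μ := hμ.1
  have hf : Continuous fun x => (cylOn Λ ω).indicator (1 : Conf E → ℝ) x - c :=
    ((isClopen_cylOn Λ ω).continuous_indicator continuous_const).sub continuous_const
  have hinner (η : Conf E) : ∑ ξ : {k // k ∈ Λ} → E,
      γ Λ (ovr Λ ξ η) * ((cylOn Λ ω).indicator 1 (ovr Λ ξ η) - c) =
        γ Λ (ovr Λ (fun k => ω k) η) - c := by
    simp only [mul_sub, Finset.sum_sub_distrib, ← Finset.sum_mul, hγ, one_mul,
      Set.indicator_apply, ovr_mem_cylOn_iff, Pi.one_apply, mul_ite, mul_one, mul_zero,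
      Finset.sum_ite_eq', Finset.mem_univ, if_true]
  have hint : Integrable ((cylOn Λ ω).indicator (1 : Conf E → ℝ)) μ :=
    (integrable_const (1 : ℝ)).indicator (measurableSet_cylOn Λ ω)
  rw [← funext hinner, hμ.2 Λ _ hf, integral_sub hint (integrable_const c),
    integral_indicator_one (measurableSet_cylOn Λ ω)]
  simp [Measure.real]

lemma withinFactor_measure_cylOn (hμ : IsDLRGibbs γ μ)
    (hγ : ∀ η, ∑ ξ : {k // k ∈ Λ} → E, γ Λ (ovr Λ ξ η) = 1) {ω : Conf E} {ε y : ℝ}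
    (h : ∀ η, WithinFactor ε (γ Λ (ovr Λ (fun k => ω k) η)) y) :
    WithinFactor ε (μ (cylOn Λ ω)).toReal y := by
  constructor
  · have := integral_nonpos (μ := μ) fun η => sub_nonpos.mpr (h η).1
    rw [integral_sub_eq_of_isDLRGibbs hμ hγ] at this
    linarith
  · have := integral_nonneg (μ := μ) fun η =>
      sub_nonneg.mpr ((inv_mul_le_iff₀ (Real.exp_pos ε)).mpr (h η).2)
    rw [integral_sub_eq_of_isDLRGibbs hμ hγ, sub_nonneg, inv_mul_le_iff₀ (Real.exp_pos ε)] at this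
    exact this

end DLR

lemma sum_specOfInter_ovr [Fintype E] [Nonempty E] (Φ : Finset ℤ → Conf E → ℝ)
    (Λ : Finset ℤ) (η : Conf E) :
    ∑ ξ : {k // k ∈ Λ} → E, specOfInter Φ Λ (ovr Λ ξ η) = 1 := by
  simp only [specOfInter, ovr_ovr, ← Finset.sum_div]
  exact div_self (Finset.sum_pos (fun _ _ => Real.exp_pos _) Finset.univ_nonempty).ne'

lemma abs_phiInter_le [Fintype E] [TopologicalSpace E] {Φ : Finset ℤ → Conf E → ℝ}
    (hΦ : IsInteraction Φ) (hTI : InterTI Φ) (hUAC : UAC Φ) (ω : Conf E) :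
    |phiInter Φ ω| ≤ ∑' V, (minAt 0).indicator (supAbs Φ) V := by
  rw [phiInter_eq, abs_neg]
  exact abs_tsum_indicator_le hΦ hTI hUAC (minAt_subset_meeting 0) ω

lemma withinFactor_exp_div {s Z P : ℝ} (hZ : 0 < Z) (hP : P ≤ Real.log Z) :
    WithinFactor (Real.log Z - P) (Real.exp s / Z) (Real.exp (s - P)) := by
  rw [← Real.exp_log hZ, ← Real.exp_sub, Real.log_exp]
  exact .of_abs_sub_le (by rw [abs_le]; constructor <;> linarith)

/-- For a translation-invariant UAC interaction `Φ` with
`φ = -∑_{V ∋ 0, V ⊆ ℤ_{≥0}} Φ_V`, there is a subexponential sequence `C_n` such that every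
shift-invariant Gibbs measure `μ` for `Φ` satisfies the weak Bowen-Gibbs bounds with
pressure `P(φ)`. -/
theorem weakBowenGibbs_of_UAC_interaction [Fintype E] [Nonempty E] [TopologicalSpace E] [DiscreteTopology E]
    [MeasurableSpace E] [MeasurableSingletonClass E]
    (Φ : Finset ℤ → Conf E → ℝ) (hΦ : IsInteraction Φ) (hTI : InterTI Φ) (hUAC : UAC Φ) :
    ∃ C : ℕ → ℝ, (∀ n, 0 < C n) ∧
      Tendsto (fun n : ℕ => Real.log (C n) / n) atTop (𝓝 0) ∧
      ∀ μ : Measure (Conf E), IsDLRGibbs (specOfInter Φ) μ → ShiftInv μ →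
        ∀ (n : ℕ) (ω : Conf E),
          (C n)⁻¹ ≤ (μ (cylPt ω n)).toReal /
              Real.exp (birk (phiInter Φ) n ω - n * press (phiInter Φ)) ∧
          (μ (cylPt ω n)).toReal /
              Real.exp (birk (phiInter Φ) n ω - n * press (phiInter Φ)) ≤ C n := by
  have hφ := abs_phiInter_le hΦ hTI hUAC
  refine ⟨fun n => Real.exp (4 * boundaryWeight Φ (Finset.Ico 0 n) +
      (Real.log (partitionFn (phiInter Φ) n) - n * press (phiInter Φ))),
    fun n => Real.exp_pos _, ?_, fun μ hμ _ n ω => ?_⟩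
  · have := ((tendsto_boundaryWeight_div hTI hUAC).const_mul 4).add
      (tendsto_log_partitionFn_sub_div hφ)
    simpa only [Real.log_exp, add_div, mul_div_assoc, mul_zero, add_zero] using this
  · have hcyl : WithinFactor (4 * boundaryWeight Φ (Finset.Ico 0 n)) (μ (cylPt ω n)).toReal
        (Real.exp (birk (phiInter Φ) n ω) / partitionFn (phiInter Φ) n) := by
      rw [cylPt_eq_cylOn]
      exact withinFactor_measure_cylOn hμ (sum_specOfInter_ovr Φ _)
        (specOfInter_withinFactor hΦ hTI hUAC hφ n ω)
    have h := hcyl.trans (withinFactor_exp_div (partitionFn_pos hφ n)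
      (nat_mul_press_le_log_partitionFn hφ n))
    exact ⟨by simpa only [Real.exp_neg] using h.exp_neg_le_div (Real.exp_pos _),
      h.div_le_exp (Real.exp_pos _)⟩

end GP
end

section
/- Let φ : Ω → ℝ be continuous and let μ and ν be ergodic S-invariant Borel probability measures on Ω, each satisfying the Bowen-Gibbs property for φ (possibly with different constants). Then μ and ν are equivalent measures, and hence μ = ν. -/
open Filter Topology MeasureTheory

namespace GP

variable {E : Type*}

/-- `μ` is Bowen-Gibbs for `φ`: there are constants `C > 1` and `P` such that
`C⁻¹ ≤ μ([ω_0^{n-1}]) / exp(S_nφ(ω) - nP) ≤ C` for all `n` and `ω`. -/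
def BowenGibbs [MeasurableSpace E] (μ : Measure (Conf E)) (φ : Conf E → ℝ) : Prop :=
  ∃ C P : ℝ, 1 < C ∧ ∀ (n : ℕ) (ω : Conf E),
    C⁻¹ ≤ (μ (cylPt ω n)).toReal / Real.exp (birk φ n ω - n * P) ∧
    (μ (cylPt ω n)).toReal / Real.exp (birk φ n ω - n * P) ≤ C

end GP

/-! Order the two measures so that `Pν ≤ Pμ`. Then the two Bowen–Gibbs bounds give
`μ [ω₀ⁿ⁻¹] ≤ Cμ Cν · ν [ω₀ⁿ⁻¹]`. By shift invariance the same holds for the cylinders over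
the windows `[-m, m]`, which are cofinal among finite windows; approximating measurable sets
by cylinders then gives `μ ≤ Cμ Cν • ν`, so `μ ≪ ν`, and an invariant measure absolutely
continuous with respect to an ergodic one coincides with it. -/

open MeasureTheory Set
open scoped ENNReal NNReal symmDiff

namespace MeasureTheory

variable {ι : Type*} {α : ι → Type*} [∀ i, MeasurableSpace (α i)] [∀ i, Countable (α i)]
  [∀ i, MeasurableSingletonClass (α i)] {μ ν : Measure (∀ i, α i)}

lemma measure_cylinder_le_of_forall_singleton {K : ℝ≥0∞} {t : Finset ι}
    (h : ∀ y, μ (cylinder t {y}) ≤ K * ν (cylinder t {y})) (S : Set (∀ i : t, α i)) :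
    μ (cylinder t S) ≤ K * ν (cylinder t S) := by
  have hfib : ∀ y ∈ S, MeasurableSet (t.restrict ⁻¹' {y} : Set (∀ i, α i)) :=
    fun y _ => (measurableSet_singleton y).cylinder t
  rw [cylinder, ← tsum_measure_preimage_singleton S.to_countable hfib,
    ← tsum_measure_preimage_singleton S.to_countable hfib, ← ENNReal.tsum_mul_left]
  exact ENNReal.tsum_le_tsum fun y => h y

lemma Measure.le_smul_of_forall_cylinder_le [IsFiniteMeasure μ] [IsFiniteMeasure ν] {K : ℝ≥0}
    (h : ∀ s : Finset ι, ∃ t, s ⊆ t ∧ ∀ y, μ (cylinder t {y}) ≤ K * ν (cylinder t {y})) :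
    μ ≤ (K : ℝ≥0∞) • ν := by
  have hcyl : ∀ c ∈ measurableCylinders α, μ c ≤ K * ν c := by
    intro c hc
    obtain ⟨s, S, -, rfl⟩ := (mem_measurableCylinders c).1 hc
    obtain ⟨t, hst, ht⟩ := h s
    exact measure_cylinder_le_of_forall_singleton ht (Finset.restrict₂ hst ⁻¹' S)
  refine Measure.le_iff.2 fun A hA => ENNReal.le_of_forall_pos_le_add fun ε hε _ => ?_
  obtain ⟨c, hc, hcA⟩ := exists_measure_symmDiff_lt_of_generateFrom_isSetRing (μ := μ + K • ν)
    isSetRing_measurableCylinders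
    ⟨{univ}, countable_singleton _, by simpa using univ_mem_measurableCylinders α, by simp⟩
    generateFrom_measurableCylinders.symm hA (ENNReal.coe_pos.2 hε)
  rw [Measure.add_apply, Measure.smul_apply, ENNReal.smul_def, smul_eq_mul] at hcA
  have hle : ∀ (ρ : Measure (∀ i, α i)) (B D : Set (∀ i, α i)), ρ B ≤ ρ D + ρ (B ∆ D) :=
    fun ρ B D => tsub_le_iff_left.1 le_measure_symmDiff
  calc μ A ≤ K * ν c + μ (c ∆ A) := by
        rw [symmDiff_comm]; exact (hle μ A c).trans (add_le_add_left (hcyl c hc) _)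
    _ ≤ K * (ν A + ν (c ∆ A)) + μ (c ∆ A) := by gcongr; exact hle ν c A
    _ = ((K : ℝ≥0∞) • ν) A + (μ (c ∆ A) + K * ν (c ∆ A)) := by
        rw [Measure.smul_apply, smul_eq_mul]; ring
    _ ≤ ((K : ℝ≥0∞) • ν) A + ε := by gcongr

end MeasureTheory

lemma Finset.subset_Icc_sup_natAbs (s : Finset ℤ) :
    s ⊆ Finset.Icc (-((s.sup Int.natAbs : ℕ) : ℤ)) ((s.sup Int.natAbs : ℕ) : ℤ) := by
  intro i hi
  have := Finset.le_sup (f := Int.natAbs) hi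
  rw [Finset.mem_Icc]
  omega

namespace GP

variable {E : Type*}

lemma shiftZ_one_iterate (n : ℕ) : (shiftZ 1 : Conf E → Conf E)^[n] = shiftZ n := by
  induction n with
  | zero => funext ω k; simp [shiftZ]
  | succ n ih =>
    funext ω k
    rw [Function.iterate_succ_apply', ih]
    simp only [shiftZ]
    congr 1
    push_cast
    ring

lemma cylPt_shiftZ_neg (m : ℕ) (ω : Conf E) :
    cylPt (shiftZ (-m) ω) (2 * m + 1) =
      shiftZ m ⁻¹' cylinder (Finset.Icc (-(m : ℤ)) m) {(Finset.Icc (-(m : ℤ)) m).restrict ω} := by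
  ext ω'
  simp only [cylPt, shiftZ, mem_ofPred_eq, mem_preimage, mem_cylinder, mem_singleton_iff,
    funext_iff, Finset.restrict, Subtype.forall, Finset.mem_Icc]
  constructor
  · intro h k hk
    have := h (k + m).toNat (by omega)
    rwa [Int.toNat_of_nonneg (by omega), add_neg_cancel_right] at this
  · intro h j hj
    have := h (j - m) (by omega)
    rwa [sub_add_cancel] at this

section Measure

variable [MeasurableSpace E]

lemma measure_cylPt_le_of_gibbs_bounds {φ : Conf E → ℝ} {μ ν : Measure (Conf E)}
    [IsFiniteMeasure μ] [IsFiniteMeasure ν] {Cμ Cν Pμ Pν : ℝ} (hCν : 0 < Cν) (hP : Pν ≤ Pμ)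
    (hμ : ∀ (n : ℕ) (ω : Conf E),
      (μ (cylPt ω n)).toReal / Real.exp (birk φ n ω - n * Pμ) ≤ Cμ)
    (hν : ∀ (n : ℕ) (ω : Conf E),
      Cν⁻¹ ≤ (ν (cylPt ω n)).toReal / Real.exp (birk φ n ω - n * Pν))
    (n : ℕ) (ω : Conf E) :
    μ (cylPt ω n) ≤ ENNReal.ofReal (Cμ * Cν) * ν (cylPt ω n) := by
  set eμ := Real.exp (birk φ n ω - n * Pμ)
  set eν := Real.exp (birk φ n ω - n * Pν)
  have hμn := (div_le_iff₀ (Real.exp_pos _)).1 (hμ n ω)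
  have hνn := (le_div_iff₀ (Real.exp_pos _)).1 (hν n ω)
  have hCμ : 0 ≤ Cμ := (div_nonneg ENNReal.toReal_nonneg (Real.exp_pos _).le).trans (hμ n ω)
  have heμν : eμ ≤ eν := Real.exp_le_exp.2 (by gcongr)
  have hreal : (μ (cylPt ω n)).toReal ≤ Cμ * Cν * (ν (cylPt ω n)).toReal :=
    calc (μ (cylPt ω n)).toReal ≤ Cμ * eμ := hμn
      _ ≤ Cμ * eν := by gcongr
      _ = Cμ * Cν * (Cν⁻¹ * eν) := by field_simp
      _ ≤ Cμ * Cν * (ν (cylPt ω n)).toReal := by gcongr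
  rw [← ENNReal.ofReal_toReal (measure_ne_top μ _), ← ENNReal.ofReal_toReal (measure_ne_top ν _),
    ← ENNReal.ofReal_mul (by positivity)]
  exact ENNReal.ofReal_le_ofReal hreal

variable [MeasurableSingletonClass E]

lemma measure_cylinder_Icc {μ : Measure (Conf E)} (hμ : MeasurePreserving (shiftZ 1) μ μ)
    (m : ℕ) (ω : Conf E) :
    μ (cylinder (Finset.Icc (-(m : ℤ)) m) {(Finset.Icc (-(m : ℤ)) m).restrict ω}) =
      μ (cylPt (shiftZ (-m) ω) (2 * m + 1)) := by
  rw [cylPt_shiftZ_neg, ← shiftZ_one_iterate,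
    (hμ.iterate m).measure_preimage ((measurableSet_singleton _).cylinder _).nullMeasurableSet]

lemma le_smul_of_gibbs_bounds [Fintype E] {φ : Conf E → ℝ} {μ ν : Measure (Conf E)}
    [IsFiniteMeasure μ] [IsFiniteMeasure ν]
    (hμs : MeasurePreserving (shiftZ 1) μ μ) (hνs : MeasurePreserving (shiftZ 1) ν ν)
    {Cμ Cν Pμ Pν : ℝ} (hCν : 0 < Cν) (hP : Pν ≤ Pμ)
    (hμ : ∀ (n : ℕ) (ω : Conf E),
      (μ (cylPt ω n)).toReal / Real.exp (birk φ n ω - n * Pμ) ≤ Cμ)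
    (hν : ∀ (n : ℕ) (ω : Conf E),
      Cν⁻¹ ≤ (ν (cylPt ω n)).toReal / Real.exp (birk φ n ω - n * Pν)) :
    μ ≤ ENNReal.ofReal (Cμ * Cν) • ν := by
  refine Measure.le_smul_of_forall_cylinder_le fun s =>
    ⟨_, Finset.subset_Icc_sup_natAbs s, fun y => ?_⟩
  rcases (cylinder (α := fun _ => E) _ {y}).eq_empty_or_nonempty with hy | ⟨ω, hω⟩
  · simp [hy]
  rw [mem_cylinder, mem_singleton_iff] at hω
  subst hω
  rw [measure_cylinder_Icc hμs, measure_cylinder_Icc hνs]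
  exact measure_cylPt_le_of_gibbs_bounds hCν hP hμ hν _ _

lemma eq_of_gibbs_bounds_of_pressure_le [Fintype E] {φ : Conf E → ℝ} {μ ν : Measure (Conf E)}
    [IsProbabilityMeasure μ] [IsProbabilityMeasure ν]
    (hμs : MeasurePreserving (shiftZ 1) μ μ) (hνe : Ergodic (shiftZ 1) ν)
    {Cμ Cν Pμ Pν : ℝ} (hCν : 0 < Cν) (hP : Pν ≤ Pμ)
    (hμ : ∀ (n : ℕ) (ω : Conf E),
      (μ (cylPt ω n)).toReal / Real.exp (birk φ n ω - n * Pμ) ≤ Cμ)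
    (hν : ∀ (n : ℕ) (ω : Conf E),
      Cν⁻¹ ≤ (ν (cylPt ω n)).toReal / Real.exp (birk φ n ω - n * Pν)) :
    μ = ν :=
  hνe.eq_of_absolutelyContinuous hμs <| Measure.absolutelyContinuous_of_le_smul <|
    le_smul_of_gibbs_bounds hμs hνe.toMeasurePreserving hCν hP hμ hν

end Measure

theorem bowenGibbs_ergodic_unique_general [Fintype E] [MeasurableSpace E] [MeasurableSingletonClass E]
    (φ : Conf E → ℝ)
    (μ ν : Measure (Conf E)) (hμp : IsProbabilityMeasure μ) (hνp : IsProbabilityMeasure ν)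
    (hμe : Ergodic (shiftZ 1) μ) (hνe : Ergodic (shiftZ 1) ν)
    (hμg : BowenGibbs μ φ) (hνg : BowenGibbs ν φ) :
    (μ ≪ ν ∧ ν ≪ μ) ∧ μ = ν := by
  obtain ⟨Cμ, Pμ, hCμ, hμb⟩ := hμg
  obtain ⟨Cν, Pν, hCν, hνb⟩ := hνg
  have hμν : μ = ν := by
    rcases le_total Pν Pμ with hP | hP
    · exact eq_of_gibbs_bounds_of_pressure_le hμe.toMeasurePreserving hνe (by linarith) hP
        (fun n ω => (hμb n ω).2) (fun n ω => (hνb n ω).1)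
    · exact (eq_of_gibbs_bounds_of_pressure_le hνe.toMeasurePreserving hμe (by linarith) hP
        (fun n ω => (hνb n ω).2) (fun n ω => (hμb n ω).1)).symm
  subst hμν
  exact ⟨⟨.rfl, .rfl⟩, rfl⟩

/-- Two ergodic shift-invariant Bowen-Gibbs measures for the same
continuous potential are equivalent, hence equal. -/
theorem bowenGibbs_ergodic_unique [Fintype E] [Nonempty E] [TopologicalSpace E] [DiscreteTopology E]
    [MeasurableSpace E] [MeasurableSingletonClass E]
    (φ : Conf E → ℝ) (hφ : Continuous φ)
    (μ ν : Measure (Conf E)) (hμp : IsProbabilityMeasure μ) (hνp : IsProbabilityMeasure ν)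
    (hμe : Ergodic (shiftZ 1) μ) (hνe : Ergodic (shiftZ 1) ν)
    (hμg : BowenGibbs μ φ) (hνg : BowenGibbs ν φ) :
    (μ ≪ ν ∧ ν ≪ μ) ∧ μ = ν :=
  bowenGibbs_ergodic_unique_general φ μ ν hμp hνp hμe hνe hμg hνg

end GP
end

section
/- Suppose γ = (γ_Λ) is a translation-invariant Gibbsian specification on Ω = E^ℤ. Then the function φ_γ(ω) = log [ γ_{{0}}(ω_0 | 𝐚_{−∞}^{−1} ω_1^{∞}) / γ_{{0}}(a | 𝐚_{−∞}^{−1} ω_1^{∞}) ] is continuous, has the extensibility property, and the Gibbsian specification γ^{φ_γ} associated with φ_γ coincides with γ. -/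
open Filter Topology MeasureTheory

/-! Translation invariance turns `φ_γ ∘ S^i` into the log-ratio of `γ_{{i}}` at `ζ` frozen to `a`
below `i` and below `i + 1`, and consistency lets this ratio be computed in any larger window.
So the sum defining `ρ_n(ζ, ω)` telescopes to `log (γ_Λ ζ' / γ_Λ ω')`, where `ζ', ω'` are `ζ, ω`
frozen to `a` below `-n`. As `n → ∞` the frozen configurations converge, uniformly by compactness
of `E^ℤ`, which gives both extensibility and `ρ^{φ_γ}(ζ, ω) = log (γ_Λ ζ / γ_Λ ω)`, i.e.
`γ^{φ_γ} = γ`. -/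

theorem Finset.sum_Icc_sub_add_one {M : Type*} [AddCommGroup M] (f : ℤ → M) {m n : ℤ}
    (hmn : m ≤ n) : ∑ i ∈ Finset.Icc m n, (f i - f (i + 1)) = f m - f (n + 1) := by
  induction n, hmn using Int.leInduction with
  | base => simp
  | succ n hmn ih =>
    have hIcc : Finset.Icc m (n + 1) = insert (n + 1) (Finset.Icc m n) :=
      (Finset.insert_Icc_right_eq_Icc_succ (b := n) (by rw [Order.succ_eq_add_one]; omega)).symm
    rw [hIcc, Finset.sum_insert (by simp), ih]
    abel

namespace GP

variable {E : Type*}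

def fillBelow (a : E) (i : ℤ) (ζ : Conf E) : Conf E := fun k => if k < i then a else ζ k

lemma NonNull.pos {γ : Finset ℤ → Conf E → ℝ} (h : NonNull γ) (Λ : Finset ℤ) (ω : Conf E) :
    0 < γ Λ ω := by
  obtain ⟨c, hc, hle⟩ := h Λ
  exact hc.trans_le (hle ω)

lemma SpecTI.singleton_eq {γ : Finset ℤ → Conf E → ℝ} (hTI : SpecTI γ) (i : ℤ) (σ : Conf E) :
    γ {i} σ = γ {0} (shiftZ i σ) := by
  have step : ∀ (i : ℤ) (ω : Conf E), γ {i + 1} ω = γ {i} (shiftZ 1 ω) := fun i ω => by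
    simpa using hTI {i} ω
  induction i using Int.induction_on generalizing σ with
  | zero => rw [shiftZ_zero]
  | succ n ih => rw [step, ih, shiftZ_shiftZ, add_comm]
  | pred n ih =>
    have hσ : σ = shiftZ 1 (shiftZ (-1) σ) := by rw [shiftZ_shiftZ, add_neg_cancel, shiftZ_zero]
    rw [hσ, ← step, sub_add_cancel, ih, shiftZ_shiftZ, shiftZ_shiftZ, shiftZ_shiftZ]
    ring_nf

lemma IsSpecification.log_sub_log_eq [Fintype E] {γ : Finset ℤ → Conf E → ℝ}
    (hs : IsSpecification γ) (hnn : NonNull γ) {V Λ : Finset ℤ} (hVΛ : V ⊆ Λ) {ξ η : Conf E}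
    (hξη : ∀ k ∉ V, ξ k = η k) :
    Real.log (γ Λ ξ) - Real.log (γ Λ η) = Real.log (γ V ξ) - Real.log (γ V η) := by
  have hovr : ∀ τ : {k // k ∈ V} → E, ovr V τ ξ = ovr V τ η := fun τ => by
    funext k
    unfold ovr
    split_ifs with hk
    exacts [rfl, hξη k hk]
  -- consistency writes `γ_Λ ξ / γ_V ξ` as a sum that only sees `ξ` off `V`
  have hmul : γ Λ ξ * γ V η = γ Λ η * γ V ξ := by
    rw [hs.2.2 V Λ hVΛ ξ, hs.2.2 V Λ hVΛ η]
    simp_rw [hovr]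
    ring
  have := congrArg Real.log hmul
  rw [Real.log_mul (hnn.pos Λ ξ).ne' (hnn.pos V η).ne',
    Real.log_mul (hnn.pos Λ η).ne' (hnn.pos V ξ).ne'] at this
  linarith

lemma phiOf_shiftZ {γ : Finset ℤ → Conf E → ℝ} (hnn : NonNull γ) (hTI : SpecTI γ)
    (a : E) (i : ℤ) (ζ : Conf E) :
    phiOf γ a (shiftZ i ζ) =
      Real.log (γ {i} (fillBelow a i ζ)) - Real.log (γ {i} (fillBelow a (i + 1) ζ)) := by
  have hnum : bca a (shiftZ i ζ) (shiftZ i ζ 0) = shiftZ i (fillBelow a i ζ) := by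
    funext k
    simp only [bca, shiftZ, fillBelow]
    split_ifs <;> first | rfl | omega | (subst_vars; rfl)
  have hden : bca a (shiftZ i ζ) a = shiftZ i (fillBelow a (i + 1) ζ) := by
    funext k
    simp only [bca, shiftZ, fillBelow]
    split_ifs <;> first | rfl | omega
  rw [phiOf, hnum, hden, ← hTI.singleton_eq, ← hTI.singleton_eq,
    Real.log_div (hnn.pos _ _).ne' (hnn.pos _ _).ne']

lemma rhoN_phiOf_eq [Fintype E] {γ : Finset ℤ → Conf E → ℝ} (hs : IsSpecification γ)
    (hnn : NonNull γ) (hTI : SpecTI γ) (a : E) {Λ : Finset ℤ} {ζ ω : Conf E}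
    (hζω : ∀ k ∉ Λ, ζ k = ω k) {n : ℕ} (hn : ∀ k ∈ Λ, k ≤ n) :
    rhoN (phiOf γ a) ζ ω n =
      Real.log (γ Λ (fillBelow a (-n) ζ)) - Real.log (γ Λ (fillBelow a (-n) ω)) := by
  set W := Finset.Icc (-(n : ℤ)) n ∪ Λ
  set L : ℤ → ℝ := fun i =>
    Real.log (γ W (fillBelow a i ζ)) - Real.log (γ W (fillBelow a i ω))
  have hstep : ∀ σ : Conf E, ∀ i, ∀ k ∉ ({i} : Finset ℤ),
      fillBelow a i σ k = fillBelow a (i + 1) σ k := by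
    intro σ i k hk
    simp only [Finset.mem_singleton] at hk
    simp only [fillBelow]
    split_ifs <;> first | rfl | omega
  have hterm : ∀ i ∈ Finset.Icc (-(n : ℤ)) n,
      phiOf γ a (shiftZ i ζ) - phiOf γ a (shiftZ i ω) = L i - L (i + 1) := by
    intro i hi
    have hiW : {i} ⊆ W := Finset.singleton_subset_iff.2 (Finset.mem_union_left _ hi)
    rw [phiOf_shiftZ hnn hTI, phiOf_shiftZ hnn hTI, ← hs.log_sub_log_eq hnn hiW (hstep ζ i),
      ← hs.log_sub_log_eq hnn hiW (hstep ω i)]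
    ring
  have htop : fillBelow a (n + 1) ζ = fillBelow a (n + 1) ω := by
    funext k
    simp only [fillBelow]
    split_ifs with hk
    · rfl
    · exact hζω k fun hkΛ => hk (Int.lt_add_one_of_le (hn k hkΛ))
  have hbot : ∀ k ∉ Λ, fillBelow a (-n) ζ k = fillBelow a (-n) ω k := by
    intro k hk
    simp only [fillBelow, hζω k hk]
  rw [rhoN, Finset.sum_congr rfl hterm, Finset.sum_Icc_sub_add_one L (by omega)]
  simp only [L, htop, sub_self, sub_zero]
  exact hs.log_sub_log_eq hnn Finset.subset_union_right hbot

lemma tendsto_fillBelow [TopologicalSpace E] (a : E) (ζ : Conf E) :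
    Tendsto (fun p : ℕ × Conf E => fillBelow a (-p.1) p.2) (atTop ×ˢ 𝓝 ζ) (𝓝 ζ) := by
  rw [tendsto_pi_nhds]
  intro k
  have hk : ∀ᶠ p : ℕ × Conf E in atTop ×ˢ 𝓝 ζ, (-k).toNat ≤ p.1 :=
    tendsto_fst.eventually (eventually_ge_atTop _)
  refine ((continuous_apply k).tendsto ζ |>.comp tendsto_snd).congr' ?_
  filter_upwards [hk] with p hp
  simp only [Function.comp_apply, fillBelow]
  rw [if_neg (by omega)]

lemma tendstoUniformly_comp_fillBelow [Finite E] [TopologicalSpace E] (a : E)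
    {h : Conf E → ℝ} (hh : Continuous h) :
    TendstoUniformly (fun (n : ℕ) ω => h (fillBelow a (-n) ω)) h atTop := by
  rw [← tendstoLocallyUniformly_iff_tendstoUniformly_of_compactSpace,
    tendstoLocallyUniformly_iff_forall_tendsto]
  intro ζ
  exact ((hh.tendsto ζ |>.comp tendsto_snd).prodMk_nhds
    (hh.tendsto ζ |>.comp (tendsto_fillBelow a ζ))).mono_right (nhds_le_uniformity _)

lemma continuous_bca [TopologicalSpace E] (a : E) {f : Conf E → E} (hf : Continuous f) :
    Continuous fun ω => bca a ω (f ω) := by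
  refine continuous_pi fun k => ?_
  by_cases hneg : k < 0 <;> by_cases hzero : k = 0 <;>
    simp only [bca, hneg, hzero, lt_self_iff_false, if_true, if_false] <;> fun_prop

lemma continuous_phiOf [TopologicalSpace E] {γ : Finset ℤ → Conf E → ℝ} (hnn : NonNull γ)
    (hc : ContSpec γ) (a : E) : Continuous (phiOf γ a) := by
  have hnum := (hc {0}).comp (continuous_bca a (continuous_apply 0))
  have hden := (hc {0}).comp (continuous_bca a (continuous_const (y := a)))
  exact (hnum.div hden fun ω => (hnn.pos _ _).ne').log
    fun ω => (div_pos (hnn.pos _ _) (hnn.pos _ _)).ne'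

lemma extensible_phiOf [Fintype E] [TopologicalSpace E] {γ : Finset ℤ → Conf E → ℝ}
    (hs : IsSpecification γ) (hnn : NonNull γ) (hc : ContSpec γ) (hTI : SpecTI γ) (a : E) :
    Extensible (phiOf γ a) := by
  intro b c
  set H : Conf E → ℝ := fun σ => Real.log (γ {0} σ)
  have hH : Continuous H := (hc {0}).log fun σ => (hnn.pos _ σ).ne'
  refine ⟨(H ∘ (upd0 · c)) - (H ∘ (upd0 · b)), ?_⟩
  have hrhoN : (fun (n : ℕ) ω => rhoN (phiOf γ a) (upd0 ω c) (upd0 ω b) n) =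
      (fun (n : ℕ) => (fun ω => H (fillBelow a (-n) ω)) ∘ (upd0 · c)) -
        (fun (n : ℕ) => (fun ω => H (fillBelow a (-n) ω)) ∘ (upd0 · b)) := by
    funext n ω
    refine rhoN_phiOf_eq hs hnn hTI a (Λ := {0}) (fun k hk => ?_) (by simp)
    simp only [upd0, Function.update_of_ne (Finset.notMem_singleton.1 hk)]
  rw [hrhoN]
  exact ((tendstoUniformly_comp_fillBelow a hH).comp _).sub
    ((tendstoUniformly_comp_fillBelow a hH).comp _)

lemma rho_phiOf_eq [Fintype E] [TopologicalSpace E] {γ : Finset ℤ → Conf E → ℝ}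
    (hs : IsSpecification γ) (hnn : NonNull γ) (hc : ContSpec γ) (hTI : SpecTI γ) (a : E)
    {Λ : Finset ℤ} {ζ ω : Conf E} (hζω : ∀ k ∉ Λ, ζ k = ω k) :
    rho (phiOf γ a) ζ ω = Real.log (γ Λ ζ) - Real.log (γ Λ ω) := by
  have hlog : Continuous fun σ => Real.log (γ Λ σ) := (hc Λ).log fun σ => (hnn.pos Λ σ).ne'
  have hfill : ∀ σ, Tendsto (fun n : ℕ => fillBelow a (-n) σ) atTop (𝓝 σ) := fun σ =>
    (tendsto_fillBelow a σ).comp (tendsto_id.prodMk tendsto_const_nhds)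
  obtain ⟨M, hM⟩ := Λ.bddAbove
  have hev : ∀ᶠ n : ℕ in atTop, Real.log (γ Λ (fillBelow a (-n) ζ)) -
      Real.log (γ Λ (fillBelow a (-n) ω)) = rhoN (phiOf γ a) ζ ω n := by
    filter_upwards [eventually_ge_atTop M.toNat] with n hn
    refine (rhoN_phiOf_eq hs hnn hTI a hζω fun k hk => ?_).symm
    have := hM hk
    omega
  exact (((hlog.tendsto ζ).comp (hfill ζ)).sub ((hlog.tendsto ω).comp (hfill ω))).congr' hev
    |>.limUnder_eq

lemma specOf_phiOf [Fintype E] [TopologicalSpace E] {γ : Finset ℤ → Conf E → ℝ}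
    (hs : IsSpecification γ) (hnn : NonNull γ) (hc : ContSpec γ) (hTI : SpecTI γ) (a : E) :
    specOf (phiOf γ a) = γ := by
  funext Λ ω
  have hexp : ∀ ξ : {k // k ∈ Λ} → E,
      Real.exp (rho (phiOf γ a) (ovr Λ ξ ω) ω) = γ Λ (ovr Λ ξ ω) * (γ Λ ω)⁻¹ := by
    intro ξ
    rw [rho_phiOf_eq hs hnn hc hTI a (Λ := Λ) fun k hk => by simp [ovr, hk], Real.exp_sub,
      Real.exp_log (hnn.pos _ _), Real.exp_log (hnn.pos _ _), div_eq_mul_inv]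
  rw [specOf, Finset.sum_congr rfl fun ξ _ => hexp ξ, ← Finset.sum_mul, hs.2.1 Λ ω, one_mul,
    inv_inv]

theorem phiOf_extensible_and_specOf_phiOf_general [Fintype E] [TopologicalSpace E]
    (γ : Finset ℤ → Conf E → ℝ) (hγ : IsGibbsSpec γ) (hTI : SpecTI γ) (a : E) :
    Continuous (phiOf γ a) ∧ Extensible (phiOf γ a) ∧ specOf (phiOf γ a) = γ := by
  obtain ⟨hs, hnn, hc⟩ := hγ
  exact ⟨continuous_phiOf hnn hc a, extensible_phiOf hs hnn hc hTI a,
    specOf_phiOf hs hnn hc hTI a⟩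

/-- For a translation-invariant Gibbsian specification `γ`, the
potential `φ_γ(ω) = log (γ_{{0}}(ω_0|𝐚_{-∞}^{-1}ω_1^∞) / γ_{{0}}(a|𝐚_{-∞}^{-1}ω_1^∞))`
is continuous, has the extensibility property, and `γ^{φ_γ} = γ`. -/
theorem phiOf_extensible_and_specOf_phiOf [Fintype E] [Nonempty E] [TopologicalSpace E] [DiscreteTopology E]
    [MeasurableSpace E] [MeasurableSingletonClass E]
    (γ : Finset ℤ → Conf E → ℝ) (hγ : IsGibbsSpec γ) (hTI : SpecTI γ) (a : E) :
    Continuous (phiOf γ a) ∧ Extensible (phiOf γ a) ∧ specOf (phiOf γ a) = γ :=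
  phiOf_extensible_and_specOf_phiOf_general γ hγ hTI a

end GP
end
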